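/- arXiv:1204.2013 — 4 statements merged into one kernel-verified Lean document; each statement's English description precedes it below -/
import Mathlib

section
/- The inclusion of the full subcategory of Segal precategories (bisimplicial sets X with X_0 discrete) into all bisimplicial sets has a left adjoint, the reduction functor, which on X collapses X_0 to its set of path components π₀(X_0) and pushes out accordingly: (X)_r is the pushout of cosk-type data making ((X)_r)_0 = π₀(X_0). -/
open CategoryTheory Simplicial Opposite

/-- A simplicial set is discrete if it is (isomorphic to) a constant functor on a set,
i.e. all face and degeneracy maps are identities. -/
def SSet.IsDiscrete (X : SSet.{0}) : Prop :=
  ∃ S : Type, Nonempty (X ≅ (Functor.const SimplexCategoryᵒᵖ).obj S)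

/-- A Segal precategory is a bisimplicial set (functor `Δᵒᵖ → SSet`) whose simplicial set
in degree zero is discrete. -/
def IsSegalPrecat (X : SimplicialObject SSet.{0}) : Prop :=
  SSet.IsDiscrete (X.obj (op ⦋0⦌))

/-- The category of Segal precategories, as a full subcategory of bisimplicial sets. -/
abbrev SegalPrecat := ObjectProperty.FullSubcategory IsSegalPrecat

/-- The set of path components of a simplicial set. -/
def SSet.pi0 (X : SSet.{0}) : Type :=
  Quot (fun a b : X _⦋0⦌ => ∃ e : X _⦋1⦌, X.δ 1 e = a ∧ X.δ 0 e = b)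


/-! Write `c` for the functor sending a simplicial set to the bisimplicial set constant in the
outer direction; it is left adjoint to evaluation at `⦋0⦌`. The quotient map `X₀ ⟶ π₀ X₀`
exhibits `π₀ X₀` as the colimit of `X₀`, so precomposition with it is bijective on maps into
discrete simplicial sets. By the adjunction, `c (X₀ ⟶ π₀ X₀)` then has the same property for
maps into Segal precategories, and this property is stable under pushout. Hence the pushout
`X ⟶ X ⊔_{c X₀} c (π₀ X₀)` is a reflection of `X` into Segal precategories. Evaluation at `⦋0⦌`
preserves the pushout, and the counit `c X₀ ⟶ X` is invertible in degree `0`, so the degree-`0`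
part of the reduction is `π₀ X₀`. -/

open Limits

namespace CategoryTheory

variable {C D : Type*} [Category* C] [Category* D]

instance ObjectProperty.isLocal_isStableUnderCobaseChange (P : ObjectProperty C) :
    P.isLocal.IsStableUnderCobaseChange where
  of_isPushout {A A' B B'} {f g f' g'} sq hf Z hZ := by
    refine ⟨fun k₁ k₂ hk => sq.hom_ext hk ((hf Z hZ).1 ?_), fun k => ?_⟩
    · simp only [← sq.w_assoc, hk]
    · obtain ⟨u, hu⟩ := (hf Z hZ).2 (g ≫ k)
      exact ⟨sq.desc k u hu.symm, sq.inl_desc _ _ _⟩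

lemma Adjunction.isLocal_map {F : C ⥤ D} {G : D ⥤ C} (adj : F ⊣ G) {P : ObjectProperty C}
    {Q : ObjectProperty D} (hQP : ∀ Y, Q Y → P (G.obj Y)) {X X' : C} {f : X ⟶ X'}
    (hf : P.isLocal f) : Q.isLocal (F.map f) := by
  intro Y hY
  have hcomp : (fun g => F.map f ≫ g) =
      (adj.homEquiv X Y).symm ∘ (fun g => f ≫ g) ∘ adj.homEquiv X' Y := by
    funext g
    simp [Adjunction.homEquiv_naturality_left_symm]
  rw [hcomp]
  exact (adj.homEquiv _ _).symm.bijective.comp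
    ((hf _ (hQP Y hY)).comp (adj.homEquiv _ _).bijective)

end CategoryTheory

namespace SimplexCategory

lemma δ_one_comp_mkOfLe {n : ℕ} (i j : Fin (n + 1)) (h : i ≤ j) :
    δ 1 ≫ mkOfLe i j h = const ⦋0⦌ ⦋n⦌ i :=
  Hom.ext_zero_left _ _

lemma δ_zero_comp_mkOfLe {n : ℕ} (i j : Fin (n + 1)) (h : i ≤ j) :
    δ 0 ≫ mkOfLe i j h = const ⦋0⦌ ⦋n⦌ j :=
  Hom.ext_zero_left _ _

instance : IsConnected SimplexCategoryᵒᵖ :=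
  isConnected_of_isInitial _ isTerminalZero.op

end SimplexCategory

namespace SimplicialObject

variable (C : Type*) [Category* C]

noncomputable abbrev constAdjEvaluationZero :
    Functor.const SimplexCategoryᵒᵖ ⊣ (evaluation SimplexCategoryᵒᵖ C).obj (op ⦋0⦌) :=
  constantPresheafAdj C SimplexCategory.isTerminalZero

instance (X : SimplicialObject C) :
    IsIso (((constAdjEvaluationZero C).counit.app X).app (op ⦋0⦌)) := by
  rw [constantPresheafAdj_counit_app_app, SimplexCategory.isTerminalZero.from_self, op_id]
  infer_instance

end SimplicialObject

namespace SSet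

def pi0.mk {K : SSet.{0}} (v : K _⦋0⦌) : K.pi0 := Quot.mk _ v

section

variable {K : SSet.{0}}

lemma pi0_mk_map_const_eq {m : SimplexCategory} (x : K.obj (op m)) (i j : Fin (m.len + 1)) :
    pi0.mk (K.map (SimplexCategory.const ⦋0⦌ m i).op x) =
      pi0.mk (K.map (SimplexCategory.const ⦋0⦌ m j).op x) := by
  wlog hij : i ≤ j generalizing i j
  · exact (this j i (le_of_not_ge hij)).symm
  apply Quot.sound
  refine ⟨K.map (SimplexCategory.mkOfLe (n := m.len) i j hij).op x, ?_, ?_⟩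
  · rw [SimplicialObject.δ_def, ← Functor.map_comp_apply, ← op_comp,
      SimplexCategory.δ_one_comp_mkOfLe]
  · rw [SimplicialObject.δ_def, ← Functor.map_comp_apply, ← op_comp,
      SimplexCategory.δ_zero_comp_mkOfLe]

lemma pi0_mk_map_const_zero_map {m m' : SimplexCategory} (θ : m' ⟶ m) (x : K.obj (op m)) :
    pi0.mk (K.map (SimplexCategory.const ⦋0⦌ m' 0).op (K.map θ.op x)) =
      pi0.mk (K.map (SimplexCategory.const ⦋0⦌ m 0).op x) := by
  rw [← Functor.map_comp_apply, ← op_comp, SimplexCategory.const_comp]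
  exact pi0_mk_map_const_eq x _ _

lemma cocone_ι_app_eq (c : Cocone K) {m : SimplexCategoryᵒᵖ} (x : K.obj m) :
    c.ι.app m x = c.ι.app (op ⦋0⦌) (K.map (SimplexCategory.const ⦋0⦌ m.unop 0).op x) :=
  (c.w_apply (SimplexCategory.const ⦋0⦌ m.unop 0).op x).symm

end

variable (K : SSet.{0})

def toPi0 : K ⟶ (Functor.const SimplexCategoryᵒᵖ).obj K.pi0 where
  app m := TypeCat.ofHom fun x => pi0.mk (K.map (SimplexCategory.const ⦋0⦌ m.unop 0).op x)
  naturality m m' θ := by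
    ext x
    exact pi0_mk_map_const_zero_map θ.unop x

lemma toPi0_app_zero (v : K _⦋0⦌) : K.toPi0.app (op ⦋0⦌) v = pi0.mk v := by
  change pi0.mk (K.map _ v) = _
  rw [SimplexCategory.const_eq_id, op_id, Functor.map_id_apply]

def isColimitPi0Cocone : IsColimit (Cocone.mk K.pi0 K.toPi0) where
  desc c := TypeCat.ofHom <| Quot.lift (c.ι.app (op ⦋0⦌)) <| by
    rintro _ _ ⟨e, rfl, rfl⟩
    rw [SimplicialObject.δ_def, SimplicialObject.δ_def, c.w_apply, c.w_apply]
  fac c m := by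
    ext x
    exact (cocone_ι_app_eq c x).symm
  uniq c f hf := by
    ext q
    induction q using Quot.ind with
    | mk v =>
      exact (congrArg f (toPi0_app_zero K v)).symm.trans
        (ConcreteCategory.congr_hom (hf (op ⦋0⦌)) v)

lemma bijective_toPi0_comp (S : Type) :
    Function.Bijective fun g : (Functor.const _).obj K.pi0 ⟶ (Functor.const _).obj S =>
      K.toPi0 ≫ g := by
  rw [← Function.Bijective.of_comp_iff _
    ((Functor.FullyFaithful.ofFullyFaithful (Functor.const SimplexCategoryᵒᵖ)).map_bijective _ _)]
  exact (isColimitPi0Cocone K).homEquiv.bijective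

lemma isDiscrete_eq_isoClosure :
    SSet.IsDiscrete = ObjectProperty.isoClosure (· ∈ Set.range (Functor.const _).obj) := by
  ext D
  simp [SSet.IsDiscrete, ObjectProperty.isoClosure]

lemma isLocal_toPi0 : ObjectProperty.isLocal SSet.IsDiscrete K.toPi0 := by
  rw [isDiscrete_eq_isoClosure, ObjectProperty.isoClosure_isLocal]
  rintro _ ⟨S, rfl⟩
  exact bijective_toPi0_comp K S

end SSet

namespace SegalPrecat

open SimplicialObject

variable (X : SimplicialObject SSet.{0})

noncomputable def reduction : SimplicialObject SSet.{0} :=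
  pushout ((constAdjEvaluationZero SSet).counit.app X)
    ((Functor.const SimplexCategoryᵒᵖ).map (X.obj (op ⦋0⦌)).toPi0)

noncomputable def toReduction : X ⟶ reduction X := pushout.inl _ _

lemma isPushout_reduction :
    IsPushout ((constAdjEvaluationZero SSet).counit.app X)
      ((Functor.const SimplexCategoryᵒᵖ).map (X.obj (op ⦋0⦌)).toPi0)
      (toReduction X) (pushout.inr _ _ : _ ⟶ reduction X) :=
  IsPushout.of_hasPushout _ _

noncomputable def reductionObjZeroIso :
    (reduction X).obj (op ⦋0⦌) ≅ (Functor.const SimplexCategoryᵒᵖ).obj (X.obj (op ⦋0⦌)).pi0 :=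
  have : IsIso ((pushout.inr _ _ : _ ⟶ reduction X).app (op ⦋0⦌)) :=
    ((isPushout_reduction X).map ((evaluation _ _).obj (op ⦋0⦌))).isIso_inr_of_isIso
  (asIso ((pushout.inr _ _ : _ ⟶ reduction X).app (op ⦋0⦌))).symm

lemma isSegalPrecat_reduction : IsSegalPrecat (reduction X) :=
  ⟨_, ⟨reductionObjZeroIso X⟩⟩

lemma isLocal_toReduction : ObjectProperty.isLocal IsSegalPrecat (toReduction X) :=
  MorphismProperty.IsStableUnderCobaseChange.of_isPushout (isPushout_reduction X)
    ((constAdjEvaluationZero SSet).isLocal_map (fun _ hY => hY) (X.obj (op ⦋0⦌)).isLocal_toPi0)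

noncomputable def reductionHomEquiv (Y : SegalPrecat) :
    ((⟨reduction X, isSegalPrecat_reduction X⟩ : SegalPrecat) ⟶ Y) ≃ (X ⟶ Y.obj) :=
  (ObjectProperty.fullyFaithfulι IsSegalPrecat).homEquiv.trans
    ((isLocal_toReduction X).homEquiv Y.obj Y.property)

lemma reductionHomEquiv_comp {Y Y' : SegalPrecat} (g : Y ⟶ Y') (k : _ ⟶ Y) :
    reductionHomEquiv X Y' (k ≫ g) =
      reductionHomEquiv X Y k ≫ (ObjectProperty.ι IsSegalPrecat).map g := by
  simp [reductionHomEquiv, Functor.FullyFaithful.homEquiv]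

noncomputable def reductionFunctor : SimplicialObject SSet.{0} ⥤ SegalPrecat :=
  Adjunction.leftAdjointOfEquiv (G := ObjectProperty.ι IsSegalPrecat)
    (F_obj := fun X => ⟨reduction X, isSegalPrecat_reduction X⟩) reductionHomEquiv
    fun X _ _ => reductionHomEquiv_comp X

noncomputable def reductionAdjunction : reductionFunctor ⊣ ObjectProperty.ι IsSegalPrecat :=
  Adjunction.adjunctionOfEquivLeft _ _

end SegalPrecat

/-- The inclusion of the full subcategory of Segal precategories into bisimplicial sets has
a left adjoint (the reduction functor), which collapses the degree-zero simplicial set to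
its set of path components. -/
theorem segalPrecat_inclusion_has_left_adjoint :
    ∃ (L : SimplicialObject SSet.{0} ⥤ SegalPrecat)
      (_ : L ⊣ ObjectProperty.ι IsSegalPrecat),
      ∀ X : SimplicialObject SSet.{0},
        Nonempty ((L.obj X).obj.obj (op ⦋0⦌) ≅
          (Functor.const SimplexCategoryᵒᵖ).obj (SSet.pi0 (X.obj (op ⦋0⦌)))) :=
  ⟨SegalPrecat.reductionFunctor, SegalPrecat.reductionAdjunction,
    fun X => ⟨SegalPrecat.reductionObjZeroIso X⟩⟩
end

section
/- For a Segal precategory X (bisimplicial set with X_0 discrete) and p ≥ 0, let X_p(v_0,...,v_p) denote the fiber of X_p → (cosk_0 X)_p = X_0^{p+1} over (v_0,...,v_p). For any simplicial set A regarded as a constant bisimplicial set, and A_{[p]} the pushout of Δ[p]_0 ← A × Δ[p]_0 → A × Δ[p], there is a natural bijection Hom(A_{[p]}, X) ≅ ∐_{(v_0,...,v_p)} Hom(A, X_p(v_0,...,v_p)). -/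
open CategoryTheory Simplicial Opposite Limits

/-- Bisimplicial sets: functors `Δᵒᵖ → SSet`. -/
abbrev BiSSet := SimplicialObject SSet.{0}

/-- The discrete (constant) simplicial set on a set `S`. -/
def cst (S : Type) : SSet.{0} := (Functor.const SimplexCategoryᵒᵖ).obj S

/-- A simplicial set regarded as a constant bisimplicial set. -/
def cstB (A : SSet.{0}) : BiSSet := (Functor.const SimplexCategoryᵒᵖ).obj A

/-- A simplicial set regarded as a bisimplicial set which is constant in the *other*
simplicial direction: in degree `k` it is the discrete simplicial set on the set of
`k`-simplices. -/
def transposeB (B : SSet.{0}) : BiSSet :=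
  B ⋙ Functor.const SimplexCategoryᵒᵖ

/-- The discrete degree-zero part `Δ[p]₀` of `Δ[p]`: the set of its `p+1` vertices,
regarded as a (doubly) constant bisimplicial set. -/
def vertObj (p : ℕ) : BiSSet := cstB (cst (Fin (p + 1)))

/-- The inclusion `Δ[p]₀ → Δ[p]` of the vertices, with `Δ[p]` regarded as a bisimplicial
set constant in the other direction. -/
def vertIncl (p : ℕ) : vertObj p ⟶ transposeB Δ[p] where
  app n :=
    { app := fun _ => TypeCat.ofHom (fun v => SSet.stdSimplex.const p v n)
      naturality := fun _ _ _ => rfl }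
  naturality n n' φ := by
    apply NatTrans.ext
    funext i
    rfl

/-- The object `A_{[p]}`: the pushout of `Δ[p]₀ ← A × Δ[p]₀ → A × Δ[p]` in bisimplicial
sets (where `A` is a simplicial set regarded as a constant bisimplicial set). -/
noncomputable def APush (A : SSet.{0}) (p : ℕ) : BiSSet :=
  pushout (prod.snd : Limits.prod (cstB A) (vertObj p) ⟶ vertObj p)
    (prod.map (𝟙 (cstB A)) (vertIncl p))

variable (X : BiSSet) {V : Type} (e : X.obj (op ⦋0⦌) ≅ cst V) (p : ℕ)

/-- The fiber `X_p(v_0, …, v_p)` of `X_p → (cosk₀ X)_p = X_0^{p+1}` over a tuple of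
vertices `(v_0, …, v_p)`, for a Segal precategory `X` whose degree-zero object is the
discrete object on `V`. -/
def fiberAt (v : Fin (p + 1) → V) : SSet.{0} where
  obj n := { t : (X.obj (op ⦋p⦌)).obj n //
    ∀ i : Fin (p + 1),
      e.hom.app n ((X.map (SimplexCategory.const ⦋0⦌ ⦋p⦌ i).op).app n t) = v i }
  map {n n'} φ := TypeCat.ofHom (fun t => ⟨(X.obj (op ⦋p⦌)).map φ t.1, by
    intro i
    have h1 := NatTrans.naturality_apply (X.map (SimplexCategory.const ⦋0⦌ ⦋p⦌ i).op) φ t.1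
    have h2 := NatTrans.naturality_apply e.hom φ
      ((X.map (SimplexCategory.const ⦋0⦌ ⦋p⦌ i).op).app n t.1)
    have h3 := t.2 i
    rw [h1, h2]
    exact h3⟩)
  map_id n := by
    ext t
    exact (X.obj (op ⦋p⦌)).map_id_apply n t.1
  map_comp φ ψ := by
    ext t
    exact (X.obj (op ⦋p⦌)).map_comp_apply φ ψ t.1

/-!
By the universal property of the pushout, a map `A_{[p]} → X` is a map `g : Δ[p]₀ → X`
together with a map `h : A × Δ[p] → X` agreeing on `A × Δ[p]₀`. Since `[0]` is initial in
`Δᵒᵖ` and `X₀` is discrete, `g` is just a tuple of vertices `v`; by the Yoneda lemma in the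
`Δ[p]` direction, `h` is just a map `f : A → X_p`. The compatibility condition says that
every vertex `d_i f` of `f` is the degeneracy of `v_i`, i.e. that `f` factors through the
fiber `X_p(v_0, …, v_p)`.
-/

open MonoidalCategory CartesianMonoidalCategory

section PushoutHom

variable {C : Type*} [Category* C]

noncomputable def pushoutHomEquiv {A B D W : C} (f : A ⟶ B) (g : A ⟶ D) [HasPushout f g] :
    (pushout f g ⟶ W) ≃ {q : (B ⟶ W) × (D ⟶ W) // f ≫ q.1 = g ≫ q.2} where
  toFun F := ⟨(pushout.inl f g ≫ F, pushout.inr f g ≫ F), pushout.condition_assoc F⟩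
  invFun q := pushout.desc q.1.1 q.1.2 q.2
  left_inv _ := pushout.hom_ext (pushout.inl_desc ..) (pushout.inr_desc ..)
  right_inv _ := Subtype.ext <| Prod.ext (pushout.inl_desc ..) (pushout.inr_desc ..)

variable [CartesianMonoidalCategory C]

-- `APush` is built from the product `⨯` of the limits API, whereas the elements of the cartesian
-- monoidal product `⊗` of presheaves are definitionally pairs.
noncomputable def tensorIsoProd (Y Z : C) [HasBinaryProduct Y Z] : Y ⊗ Z ≅ Y ⨯ Z :=
  (tensorProductIsBinaryProduct Y Z).conePointUniqueUpToIso (limit.isLimit _)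

lemma tensorIsoProd_hom_fst (Y Z : C) [HasBinaryProduct Y Z] :
    (tensorIsoProd Y Z).hom ≫ prod.fst = fst Y Z :=
  IsLimit.conePointUniqueUpToIso_hom_comp _ _ (Discrete.mk WalkingPair.left)

lemma tensorIsoProd_hom_snd (Y Z : C) [HasBinaryProduct Y Z] :
    (tensorIsoProd Y Z).hom ≫ prod.snd = snd Y Z :=
  IsLimit.conePointUniqueUpToIso_hom_comp _ _ (Discrete.mk WalkingPair.right)

lemma tensorIsoProd_hom_prodMap (Y : C) {Z Z' : C} (f : Z ⟶ Z') [HasBinaryProduct Y Z]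
    [HasBinaryProduct Y Z'] :
    (tensorIsoProd Y Z).hom ≫ prod.map (𝟙 Y) f = (Y ◁ f) ≫ (tensorIsoProd Y Z').hom := by
  apply prod.hom_ext
  · rw [Category.assoc, Category.assoc, prod.map_fst, Category.comp_id, tensorIsoProd_hom_fst,
      tensorIsoProd_hom_fst, whiskerLeft_fst]
  · rw [Category.assoc, Category.assoc, prod.map_snd, tensorIsoProd_hom_snd, ← Category.assoc,
      tensorIsoProd_hom_snd, whiskerLeft_snd]

noncomputable def pushoutSndProdMapHomEquiv (Y : C) {Z Z' W : C} (f : Z ⟶ Z')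
    [HasBinaryProduct Y Z] [HasBinaryProduct Y Z']
    [HasPushout (prod.snd : Y ⨯ Z ⟶ Z) (prod.map (𝟙 Y) f)] :
    (pushout (prod.snd : Y ⨯ Z ⟶ Z) (prod.map (𝟙 Y) f) ⟶ W) ≃
      {q : (Z ⟶ W) × (Y ⊗ Z' ⟶ W) // snd Y Z ≫ q.1 = (Y ◁ f) ≫ q.2} :=
  (pushoutHomEquiv _ _).trans <| Equiv.subtypeEquiv
    ((Equiv.refl _).prodCongr ((tensorIsoProd Y Z').symm.homCongr (Iso.refl W))) fun q => by
      rw [← cancel_epi (tensorIsoProd Y Z).hom, ← Category.assoc, tensorIsoProd_hom_snd,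
        ← Category.assoc, tensorIsoProd_hom_prodMap]
      simp

end PushoutHom

lemma BiSSet.hom_ext {Y Z : BiSSet} {u w : Y ⟶ Z}
    (h : ∀ n m x, (u.app n).app m x = (w.app n).app m x) : u = w :=
  NatTrans.ext <| funext fun n => NatTrans.ext <| funext fun m =>
    ConcreteCategory.hom_ext _ _ (h n m)

section Yoneda

open SSet

variable (A : SSet.{0}) (n : SimplexCategory)

def tensorTransposeHomEquiv :
    (cstB A ⊗ transposeB (stdSimplex.obj n) ⟶ X) ≃ (A ⟶ X.obj (op n)) where
  toFun h :=
    { app m := ↾fun a => (h.app (op n)).app m (a, stdSimplex.objEquiv.symm (𝟙 n))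
      naturality m m' φ := ConcreteCategory.hom_ext _ _ fun a =>
        NatTrans.naturality_apply (h.app (op n)) φ ((a, stdSimplex.objEquiv.symm (𝟙 n)) :
          ((cstB A ⊗ transposeB (stdSimplex.obj n)).obj (op n)).obj m) }
  invFun f :=
    { app k :=
        { app m := ↾fun x => (X.map (stdSimplex.objEquiv x.2).op).app m (f.app m x.1)
          naturality m m' φ := ConcreteCategory.hom_ext _ _ fun x => by
            change (X.map (stdSimplex.objEquiv x.2).op).app m' (f.app m' (A.map φ x.1)) =
              (X.obj k).map φ ((X.map (stdSimplex.objEquiv x.2).op).app m (f.app m x.1))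
            exact (congrArg _ (NatTrans.naturality_apply f φ x.1)).trans
              (NatTrans.naturality_apply (X.map _) φ _) }
      naturality k k' ψ := SSet.hom_ext fun m => ConcreteCategory.hom_ext _ _ fun x => by
        change (X.map (ψ.unop ≫ stdSimplex.objEquiv x.2).op).app m (f.app m x.1) =
          (X.map ψ).app m ((X.map (stdSimplex.objEquiv x.2).op).app m (f.app m x.1))
        rw [op_comp, X.map_comp]
        rfl }
  left_inv h := BiSSet.hom_ext fun k m x => by
    have hx : (stdSimplex.obj n).map (stdSimplex.objEquiv x.2).op
        (stdSimplex.objEquiv.symm (𝟙 n)) = x.2 := by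
      simp only [stdSimplex.map_apply, Quiver.Hom.unop_op, Equiv.apply_symm_apply,
        Category.comp_id]
      exact Equiv.symm_apply_apply _ _
    change (X.map (stdSimplex.objEquiv x.2).op).app m
      ((h.app (op n)).app m (x.1, stdSimplex.objEquiv.symm (𝟙 n))) = (h.app k).app m (x.1, x.2)
    conv_rhs => rw [← hx]
    exact (types_congr_hom (NatTrans.congr_app (h.naturality (stdSimplex.objEquiv x.2).op) m)
      ((x.1, stdSimplex.objEquiv.symm (𝟙 n)) :
        ((cstB A ⊗ transposeB (stdSimplex.obj n)).obj (op n)).obj m)).symm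
  right_inv f := SSet.hom_ext fun m => ConcreteCategory.hom_ext _ _ fun a => by
    change (X.map (𝟙 (op n))).app m (f.app m a) = f.app m a
    simp

end Yoneda

section Vertices

-- `[0]` is initial in `Δᵒᵖ`, so a map out of a constant functor is determined in degree `0`.
noncomputable def discreteHomEquiv (S : Type) : (cstB (cst S) ⟶ X) ≃ (S → V) :=
  (limitOfDiagramInitial SimplexCategory.isTerminalZero.op X).homEquiv.symm.trans <|
    ((Iso.refl _).homCongr e).trans <|
      (limitOfDiagramInitial SimplexCategory.isTerminalZero.op (cst V)).homEquiv.symm.trans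
        TypeCat.homEquiv

lemma discreteHomEquiv_apply {S : Type} (g : cstB (cst S) ⟶ X) (m : SimplexCategoryᵒᵖ)
    (s : S) : discreteHomEquiv X e S g s = e.hom.app m ((g.app (op ⦋0⦌)).app m s) :=
  types_congr_hom
    ((Cone.mk _ (g.app (op ⦋0⦌) ≫ e.hom)).w (SimplexCategory.const m.unop ⦋0⦌ 0).op) s

end Vertices

section Fiber

variable {X p} {A : SSet.{0}}

def LandsInFiber (f : A ⟶ X.obj (op ⦋p⦌)) (v : Fin (p + 1) → V) : Prop :=
  ∀ (m : SimplexCategoryᵒᵖ) (a : A.obj m) (i : Fin (p + 1)),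
    e.hom.app m ((X.map (SimplexCategory.const ⦋0⦌ ⦋p⦌ i).op).app m (f.app m a)) = v i

def fiberHomEquiv (v : Fin (p + 1) → V) :
    (A ⟶ fiberAt X e p v) ≃ {f : A ⟶ X.obj (op ⦋p⦌) // LandsInFiber e f v} where
  toFun s :=
    ⟨{ app m := ↾fun a => (s.app m a).1
       naturality _ _ φ := ConcreteCategory.hom_ext _ _ fun a =>
        congrArg Subtype.val (NatTrans.naturality_apply s φ a) },
      fun m a => (s.app m a).2⟩
  invFun f :=
    { app m := ↾fun a => ⟨f.1.app m a, f.2 m a⟩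
      naturality _ _ φ := ConcreteCategory.hom_ext _ _ fun a =>
        Subtype.ext (NatTrans.naturality_apply f.1 φ a) }
  left_inv _ := rfl
  right_inv _ := rfl

-- Both sides, evaluated at `(a, i)` in bidegree `(n, m)`, are degeneracies along `[n] → [0]`
-- of elements of `X_{0,m}`, which `e` detects.
lemma snd_comp_eq_whiskerLeft_vertIncl_comp_iff (g : vertObj p ⟶ X)
    (h : cstB A ⊗ transposeB Δ[p] ⟶ X) :
    snd (cstB A) (vertObj p) ≫ g = (cstB A ◁ vertIncl p) ≫ h ↔
      LandsInFiber e (tensorTransposeHomEquiv X A ⦋p⦌ h) (discreteHomEquiv X e _ g) := by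
  obtain ⟨f, rfl⟩ := (tensorTransposeHomEquiv X A ⦋p⦌).symm.surjective h
  rw [Equiv.apply_symm_apply]
  constructor
  · intro H m a i
    have H₀ := types_congr_hom (NatTrans.congr_app (NatTrans.congr_app H (op ⦋0⦌)) m)
      ((a, i) : ((cstB A ⊗ vertObj p).obj (op ⦋0⦌)).obj m)
    exact (congrArg (e.hom.app m) H₀.symm).trans (discreteHomEquiv_apply X e g m i).symm
  · intro H
    refine BiSSet.hom_ext fun n m x => ?_
    change (g.app n).app m x.2 =
      (X.map (SimplexCategory.const n.unop ⦋p⦌ x.2).op).app m (f.app m x.1)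
    have hg := types_congr_hom (NatTrans.congr_app
      ((Cone.mk _ g).w (SimplexCategory.const n.unop ⦋0⦌ 0).op) m) x.2
    refine hg.symm.trans ?_
    rw [SimplexCategory.const_fac_thru_zero n.unop ⦋p⦌ x.2, op_comp, X.map_comp,
      NatTrans.comp_app, NatTrans.comp_app, types_comp_apply]
    exact congrArg ((X.map (SimplexCategory.const n.unop ⦋0⦌ 0).op).app m) <|
      (e.app m).toEquiv.injective <|
        (discreteHomEquiv_apply X e g m x.2).symm.trans (H m x.1 x.2).symm

end Fiber

/-- For a Segal precategory `X` (with degree-zero object the discrete object on `V`),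
maps `A_{[p]} → X` out of the pushout `A_{[p]} = (Δ[p]₀) ⊔_{A × Δ[p]₀} (A × Δ[p])`
correspond naturally to pairs of a tuple of vertices `(v_0, …, v_p)` and a map
`A → X_p(v_0, …, v_p)` into the corresponding fiber:
`Hom(A_{[p]}, X) ≅ ∐_{(v_0, …, v_p)} Hom(A, X_p(v_0, …, v_p))`. -/
theorem aPush_hom_decomposition (A : SSet.{0}) :
    Nonempty ((APush A p ⟶ X) ≃
      (Σ v : Fin (p + 1) → V, (A ⟶ fiberAt X e p v))) :=
  ⟨(pushoutSndProdMapHomEquiv (cstB A) (vertIncl p)).trans <|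
    (Equiv.subtypeEquiv ((discreteHomEquiv X e _).prodCongr (tensorTransposeHomEquiv X A ⦋p⦌))
      fun q => snd_comp_eq_whiskerLeft_vertIncl_comp_iff e q.1 q.2).trans <|
    (Equiv.subtypeProdEquivSigmaSubtype fun v f => LandsInFiber e f v).trans <|
    Equiv.sigmaCongrRight fun v => (fiberHomEquiv e v).symm⟩
end

section
/- A simplex σ of a simplicial set X (in any degree m) is nondegenerate if and only if no two of its degeneracies are equal, i.e., s_i σ ≠ s_j σ for all i < j. -/
/-! If `s_i x = s_j x` with `i < j = j' + 1`, then `x = d_i s_i x = d_i s_j x = s_{j'} d_i x`;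
conversely `s_i s_i = s_{i+1} s_i`. -/

open CategoryTheory Simplicial

/-- A simplex `σ ∈ X_m` is degenerate if it is of the form `s_i τ` for some degeneracy
operator `s_i` and some simplex `τ` of dimension one lower. -/
def SSet.IsDegenerateSimplex (X : SSet.{0}) : ∀ {m : ℕ}, X _⦋m⦌ → Prop
| 0, _ => False
| (k + 1), σ => ∃ (i : Fin (k + 1)) (τ : X _⦋k⦌), X.σ i τ = σ

namespace SSet

variable (X : SSet.{0})

theorem isDegenerateSimplex_of_σ_eq_σ {m : ℕ} {x : X _⦋m⦌} {i j : Fin (m + 1)} (hij : i < j)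
    (h : X.σ i x = X.σ j x) : X.IsDegenerateSimplex x := by
  cases m with
  | zero => exact absurd hij (by omega)
  | succ k =>
    obtain ⟨j', rfl⟩ := Fin.exists_succ_eq.mpr (Fin.ne_zero_of_lt hij)
    refine ⟨j', X.δ i x, ?_⟩
    rw [← X.δ_comp_σ_of_le_apply (Fin.le_castSucc_iff.mpr hij), ← h, X.δ_comp_σ_self_apply]

theorem IsDegenerateSimplex.exists_σ_eq_σ {m : ℕ} {x : X _⦋m⦌} (hx : X.IsDegenerateSimplex x) :
    ∃ i j : Fin (m + 1), i < j ∧ X.σ i x = X.σ j x := by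
  cases m with
  | zero => exact hx.elim
  | succ k =>
    obtain ⟨i, y, rfl⟩ := hx
    exact ⟨i.castSucc, i.succ, i.castSucc_lt_succ, X.σ_comp_σ_apply le_rfl y⟩

theorem isDegenerateSimplex_iff_exists_σ_eq_σ {m : ℕ} (x : X _⦋m⦌) :
    X.IsDegenerateSimplex x ↔ ∃ i j : Fin (m + 1), i < j ∧ X.σ i x = X.σ j x :=
  ⟨IsDegenerateSimplex.exists_σ_eq_σ X, fun ⟨_, _, hij, h⟩ ↦ X.isDegenerateSimplex_of_σ_eq_σ hij h⟩

end SSet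

/-- A simplex `σ` of a simplicial set `X` (in any degree `m`) is nondegenerate if and only
if no two of its degeneracies are equal, i.e. `s_i σ ≠ s_j σ` for all `i < j`. -/
theorem nondegenerate_iff_degeneracies_distinct (X : SSet.{0}) (m : ℕ) (σ : X _⦋m⦌) :
    ¬ X.IsDegenerateSimplex σ ↔
      ∀ i j : Fin (m + 1), i < j → X.σ i σ ≠ X.σ j σ := by
  simp only [X.isDegenerateSimplex_iff_exists_σ_eq_σ, not_exists, not_and, ne_eq]
end

section
/- Let X and Y be bisimplicial sets with f : X → Y a monomorphism in each degree. Then for each m, the intersection of X_m and L_m Y inside Y_m is exactly L_m X, and consequently the relative latching map X_m ⊔_{L_m X} L_m Y → Y_m is a monomorphism. -/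
/-!
Fix the inner degree `n`, so that `X` and `Y` become simplicial sets `m ↦ (X_m)_n` and
`m ↦ (Y_m)_n`. In degree `n` the latching map `L_m X → X_m` is injective with image the
degenerate `m`-simplices: every element of the colimit is represented by a non-degenerate
simplex along a surjection, and by the uniqueness half of the Eilenberg–Zilber lemma
this representative is determined by its image in `X_m`. A monomorphism of simplicial sets
reflects degeneracy, so `X_m ∩ L_m Y = L_m X` inside `Y_m`: the square of latching maps is a
pullback of injections in every degree, and for such a square of sets the map out of the
pushout is injective.
-/

open CategoryTheory Simplicial Opposite Limits

/-- The indexing category for the `m`-th latching object: surjections `⦋m⦌ ↠ ⦋k⦌` with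
`k < m`; a morphism `(k, σ) → (k', σ')` is `τ : [k'] → ⦋k⦌` with `σ' ≫ τ = σ`
(so that the diagram below is covariant via `X.map τ.op`). -/
structure LatchIx (m : ℕ) where
  /-- the target dimension -/
  k : ℕ
  hk : k < m
  /-- the surjection `⦋m⦌ ↠ ⦋k⦌` -/
  σ : (⦋m⦌ : SimplexCategory) ⟶ ⦋k⦌
  surj : Function.Surjective σ.toOrderHom

instance (m : ℕ) : Category (LatchIx m) where
  Hom a b := { τ : (⦋b.k⦌ : SimplexCategory) ⟶ ⦋a.k⦌ // b.σ ≫ τ = a.σ }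
  id a := ⟨𝟙 _, Category.comp_id _⟩
  comp {a b c} f g := ⟨g.1 ≫ f.1, by rw [← Category.assoc, g.2, f.2]⟩
  id_comp f := Subtype.ext (Category.comp_id _)
  comp_id f := Subtype.ext (Category.id_comp _)
  assoc f g h := Subtype.ext (Category.assoc h.1 g.1 f.1).symm

/-- The latching diagram of a bisimplicial set `X` at `⦋m⦌`. -/
def latchDiagram (X : BiSSet) (m : ℕ) : LatchIx m ⥤ SSet.{0} where
  obj a := X.obj (op ⦋a.k⦌)
  map {a b} τ := X.map τ.1.op
  map_id a := by
    try dsimp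
    rw [show ((𝟙 a : a ⟶ a) : { τ : (⦋a.k⦌ : SimplexCategory) ⟶ ⦋a.k⦌ // a.σ ≫ τ = a.σ }).1
      = 𝟙 (⦋a.k⦌ : SimplexCategory) from rfl, op_id, X.map_id]
  map_comp {a b c} f g := by
    try dsimp
    rw [show ((f ≫ g : a ⟶ c) :
        { τ : (⦋c.k⦌ : SimplexCategory) ⟶ ⦋a.k⦌ // c.σ ≫ τ = a.σ }).1 = g.1 ≫ f.1 from rfl,
      op_comp, X.map_comp]

/-- The canonical cocone on the latching diagram with vertex `X_m`. -/
def latchCocone (X : BiSSet) (m : ℕ) : Cocone (latchDiagram X m) where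
  pt := X.obj (op ⦋m⦌)
  ι :=
    { app := fun a => X.map a.σ.op
      naturality := fun a b τ => by
        dsimp [latchDiagram]
        rw [Category.comp_id, ← X.map_comp, ← op_comp, τ.2] }

/-- The `m`-th latching object `L_m X` of a bisimplicial set. -/
noncomputable def latchObj (X : BiSSet) (m : ℕ) : SSet.{0} :=
  colimit (latchDiagram X m)

/-- The canonical map `L_m X → X_m`. -/
noncomputable def latchMap (X : BiSSet) (m : ℕ) : latchObj X m ⟶ X.obj (op ⦋m⦌) :=
  colimit.desc _ (latchCocone X m)

/-- The map `L_m X → L_m Y` induced by `f : X → Y`. -/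
noncomputable def latchHom {X Y : BiSSet} (f : X ⟶ Y) (m : ℕ) :
    latchObj X m ⟶ latchObj Y m :=
  colimit.desc _
    { pt := latchObj Y m
      ι :=
        { app := fun a => f.app (op ⦋a.k⦌) ≫ colimit.ι (latchDiagram Y m) a
          naturality := fun a b τ => by
            show (latchDiagram X m).map τ ≫ (f.app (op ⦋b.k⦌) ≫ colimit.ι (latchDiagram Y m) b)
              = (f.app (op ⦋a.k⦌) ≫ colimit.ι (latchDiagram Y m) a) ≫
                  𝟙 (colimit (latchDiagram Y m))
            erw [Category.comp_id, ← Category.assoc,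
              show (latchDiagram X m).map τ ≫ f.app (op ⦋b.k⦌)
                = f.app (op ⦋a.k⦌) ≫ (latchDiagram Y m).map τ from f.naturality τ.1.op,
              Category.assoc, colimit.w (latchDiagram Y m) τ]
            rfl } }

lemma latch_comm {X Y : BiSSet} (f : X ⟶ Y) (m : ℕ) :
    latchMap X m ≫ f.app (op ⦋m⦌) = latchHom f m ≫ latchMap Y m := by
  apply colimit.hom_ext
  intro a
  simp only [latchMap, latchHom, latchCocone, colimit.ι_desc, colimit.ι_desc_assoc,
    Category.assoc]
  erw [colimit.ι_desc_assoc, colimit.ι_desc_assoc, Category.assoc, colimit.ι_desc]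
  exact f.naturality a.σ.op

/-- The relative latching map `X_m ⊔_{L_m X} L_m Y → Y_m` of a map `f : X → Y` of
bisimplicial sets. -/
noncomputable def relLatchMap {X Y : BiSSet} (f : X ⟶ Y) (m : ℕ) :
    pushout (latchMap X m) (latchHom f m) ⟶ Y.obj (op ⦋m⦌) :=
  pushout.desc (f.app (op ⦋m⦌)) (latchMap Y m) (latch_comm f m)

/-- `f` is a Reedy cofibration (w.r.t. the Kan–Quillen model structure, whose cofibrations
are the monomorphisms) if all its relative latching maps are monomorphisms. -/
def IsReedyCofibration {X Y : BiSSet} (f : X ⟶ Y) : Prop :=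
  ∀ m : ℕ, Mono (relLatchMap f m)

/-- A simplex of `X_m` (in some simplicial degree `n`) is degenerate if it is in the image
of one of the degeneracy maps `s_i : X_{m-1} → X_m`; the degenerate simplices form the
image of the canonical map `L_m X → X_m` from the latching object. -/
def IsDeg (X : BiSSet) : ∀ (m : ℕ) {n : SimplexCategoryᵒᵖ}, (X.obj (op ⦋m⦌)).obj n → Prop :=
  fun m {n} t => match m, n, t with
  | 0, _, _ => False
  | (k + 1), n, t => ∃ (i : Fin (k + 1)) (s : (X.obj (op ⦋k⦌)).obj n),
      (X.map (SimplexCategory.σ i).op).app n s = t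

namespace BiSSet

/-- The simplicial set `m ↦ (W_m)_n`. -/
abbrev outerAt (W : BiSSet) (n : SimplexCategoryᵒᵖ) : SSet.{0} :=
  W ⋙ (evaluation SimplexCategoryᵒᵖ (Type 0)).obj n

lemma isDeg_iff_mem_degenerate (W : BiSSet) (m : ℕ) (n : SimplexCategoryᵒᵖ)
    (t : (W.obj (op ⦋m⦌)).obj n) : IsDeg W m t ↔ t ∈ (W.outerAt n).degenerate m := by
  cases m with
  | zero => simp [IsDeg]
  | succ k =>
    rw [SSet.degenerate_eq_iUnion_range_σ]
    simp only [IsDeg, Set.mem_iUnion, Set.mem_range]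
    rfl

lemma app_mem_degenerate_iff {X Y : BiSSet} (f : X ⟶ Y) (hf : ∀ d, Mono (f.app d)) (m : ℕ)
    (n : SimplexCategoryᵒᵖ) (t : (X.obj (op ⦋m⦌)).obj n) :
    (f.app (op ⦋m⦌)).app n t ∈ (Y.outerAt n).degenerate m ↔
      t ∈ (X.outerAt n).degenerate m := by
  have : Mono f := NatTrans.mono_of_mono_app f
  exact SSet.degenerate_iff_of_mono
    (Functor.whiskerRight f ((evaluation SimplexCategoryᵒᵖ (Type 0)).obj n)) t

section Latching

variable (W : BiSSet) (m : ℕ) (n : SimplexCategoryᵒᵖ)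

lemma latchMap_app_ι_app (a : LatchIx m) (z : (W.obj (op ⦋a.k⦌)).obj n) :
    (latchMap W m).app n ((colimit.ι (latchDiagram W m) a).app n z) = (W.map a.σ.op).app n z :=
  ConcreteCategory.congr_hom (NatTrans.congr_app (colimit.ι_desc (latchCocone W m) a) n) z

lemma exists_ι_app_eq (p : (latchObj W m).obj n) :
    ∃ (a : LatchIx m) (z : (W.obj (op ⦋a.k⦌)).obj n),
      (colimit.ι (latchDiagram W m) a).app n z = p :=
  Types.jointly_surjective _ (isColimitOfPreserves ((evaluation SimplexCategoryᵒᵖ (Type 0)).obj n)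
    (colimit.isColimit (latchDiagram W m))) p

lemma exists_ι_app_nonDegenerate_eq (p : (latchObj W m).obj n) :
    ∃ (a : LatchIx m) (z : (W.obj (op ⦋a.k⦌)).obj n),
      z ∈ (W.outerAt n).nonDegenerate a.k ∧ (colimit.ι (latchDiagram W m) a).app n z = p := by
  obtain ⟨a, z, rfl⟩ := exists_ι_app_eq W m n p
  obtain ⟨k, e, _, ⟨y, hy⟩, rfl⟩ := (W.outerAt n).exists_nonDegenerate z
  have : Epi a.σ := SimplexCategory.epi_iff_surjective.2 a.surj
  let b : LatchIx m := ⟨k, (SimplexCategory.len_le_of_epi e).trans_lt a.hk, a.σ ≫ e,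
    SimplexCategory.epi_iff_surjective.1 inferInstance⟩
  refine ⟨b, y, hy, ?_⟩
  rw [← colimit.w (latchDiagram W m) (⟨e, rfl⟩ : b ⟶ a)]
  rfl

lemma latchMap_app_injective : Function.Injective ((latchMap W m).app n) := by
  intro p q hpq
  obtain ⟨⟨k, _, σ, hσ⟩, y, hy, rfl⟩ := exists_ι_app_nonDegenerate_eq W m n p
  obtain ⟨⟨k', _, σ', hσ'⟩, y', hy', rfl⟩ := exists_ι_app_nonDegenerate_eq W m n q
  rw [latchMap_app_ι_app, latchMap_app_ι_app] at hpq
  have : Epi σ := SimplexCategory.epi_iff_surjective.2 hσ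
  have : Epi σ' := SimplexCategory.epi_iff_surjective.2 hσ'
  obtain rfl : k = k' := (W.outerAt n).unique_nonDegenerate_dim _ σ ⟨y, hy⟩ rfl σ' ⟨y', hy'⟩ hpq
  obtain rfl : σ = σ' := (W.outerAt n).unique_nonDegenerate_map _ σ ⟨y, hy⟩ rfl σ' ⟨y', hy'⟩ hpq
  obtain rfl : y = y' := congrArg Subtype.val
    ((W.outerAt n).unique_nonDegenerate_simplex _ σ ⟨y, hy⟩ rfl σ ⟨y', hy'⟩ hpq)
  rfl

lemma range_latchMap_app :
    Set.range ((latchMap W m).app n) = (W.outerAt n).degenerate m := by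
  ext t
  constructor
  · rintro ⟨p, rfl⟩
    obtain ⟨a, z, rfl⟩ := exists_ι_app_eq W m n p
    exact ⟨a.k, a.hk, a.σ, z, (latchMap_app_ι_app W m n a z).symm⟩
  · rw [SSet.mem_degenerate_iff]
    rintro ⟨k, hk, e, he, z, rfl⟩
    exact ⟨_, latchMap_app_ι_app W m n ⟨k, hk, e, SimplexCategory.epi_iff_surjective.1 he⟩ z⟩

end Latching

section Relative

variable {X Y : BiSSet} (f : X ⟶ Y) (m : ℕ) (n : SimplexCategoryᵒᵖ)

lemma isPullback_latchMap_app (hf : ∀ d, Mono (f.app d)) :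
    IsPullback ((latchMap X m).app n) ((latchHom f m).app n) ((f.app (op ⦋m⦌)).app n)
      ((latchMap Y m).app n) := by
  have hw : (latchMap X m).app n ≫ (f.app _).app n =
      (latchHom f m).app n ≫ (latchMap Y m).app n := by
    rw [← NatTrans.comp_app, latch_comm, NatTrans.comp_app]
  rw [Types.isPullback_iff]
  refine ⟨hw, fun p q h => latchMap_app_injective X m n h.1, fun t l htl => ?_⟩
  have hdeg : t ∈ (X.outerAt n).degenerate m := by
    rw [← app_mem_degenerate_iff f hf, ← range_latchMap_app]
    exact ⟨l, htl.symm⟩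
  obtain ⟨p, rfl⟩ := (range_latchMap_app X m n).ge hdeg
  refine ⟨p, rfl, latchMap_app_injective Y m n ?_⟩
  rw [← htl]
  exact (ConcreteCategory.congr_hom hw p).symm

lemma mono_relLatchMap (hf : ∀ d, Mono (f.app d)) : Mono (relLatchMap f m) := by
  have (n : SimplexCategoryᵒᵖ) : Mono ((relLatchMap f m).app n) :=
    Types.mono_of_isPushout_of_isPullback
      ((IsPushout.of_hasPushout _ _).map ((evaluation SimplexCategoryᵒᵖ (Type 0)).obj n))
      (isPullback_latchMap_app f m n hf)
      (NatTrans.congr_app (pushout.inl_desc _ _ _) n)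
      (NatTrans.congr_app (pushout.inr_desc _ _ _) n)
      (fun _ _ _ _ h => latchMap_app_injective Y m n h)
  exact NatTrans.mono_of_mono_app _

end Relative

end BiSSet

/-- Let `f : X → Y` be a map of bisimplicial sets which is a monomorphism in each degree.
Then for each `m` the intersection of `X_m` and `L_m Y` inside `Y_m` is exactly `L_m X`
(identifying the latching objects with the degenerate simplices): a simplex of `X_m`
whose image in `Y_m` is degenerate is itself degenerate, and conversely.  Consequently
the relative latching map `X_m ⊔_{L_m X} L_m Y → Y_m` is a monomorphism. -/
theorem latching_intersection_and_relative_latching_mono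
    {X Y : BiSSet} (f : X ⟶ Y) (hf : ∀ d : SimplexCategoryᵒᵖ, Mono (f.app d)) :
    (∀ (m : ℕ) (n : SimplexCategoryᵒᵖ) (t : (X.obj (op ⦋m⦌)).obj n),
      IsDeg X m t ↔ IsDeg Y m ((f.app (op ⦋m⦌)).app n t)) ∧
    (∀ m : ℕ, Mono (relLatchMap f m)) := by
  refine ⟨fun m n t => ?_, fun m => BiSSet.mono_relLatchMap f m hf⟩
  rw [BiSSet.isDeg_iff_mem_degenerate, BiSSet.isDeg_iff_mem_degenerate,
    BiSSet.app_mem_degenerate_iff f hf]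
end
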